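/- arXiv:math/0312372 — 6 statements merged into one kernel-verified Lean document; each statement's English description precedes it below -/
import Mathlib

section
/- (Lemma 1.1, abstract gap bound.) Let H and G be symmetric linear maps on a real inner product space E. Suppose u_1 ∈ E is a unit vector with H u_1 = λ_1 u_1 for some λ_1 ∈ ℝ, that λ_2 ∈ ℝ satisfies λ_2 ≥ λ_1, and that every v ∈ E with ⟨u_1, v⟩ = 0 satisfies ⟨v, H v⟩ ≥ λ_2 ‖v‖². Then the fundamental gap Γ := λ_2 − λ_1 satisfies Γ·⟨u_1, [G,[H,G]] u_1⟩ ≤ 2·‖[H,G] u_1‖². -/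
/-!
Write `A = [H,G]`. Since `H` and `G` are symmetric, `A` is skew, so
`⟨u₁, [G,A] u₁⟩ = 2⟨G u₁, A u₁⟩`, and `A u₁ = T (G u₁)` with `T = H - λ₁`. As `T u₁ = 0`, both
sides only see the component `v` of `G u₁` orthogonal to `u₁`. The gap gives `Γ‖v‖² ≤ ⟨v, T v⟩`,
and combined with Cauchy–Schwarz `⟨v, T v⟩ ≤ ‖v‖‖T v‖` this yields `Γ⟨v, T v⟩ ≤ ‖T v‖²`.
-/

open scoped RealInnerProductSpace

section

variable {E : Type*} [NormedAddCommGroup E] [InnerProductSpace ℝ E]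

theorem mul_inner_le_norm_sq_of_mul_norm_sq_le {x y : E} {Γ : ℝ} (hΓ : 0 ≤ Γ)
    (h : Γ * ‖x‖ ^ 2 ≤ ⟪x, y⟫) : Γ * ⟪x, y⟫ ≤ ‖y‖ ^ 2 := by
  have hcs : ⟪x, y⟫ ≤ ‖x‖ * ‖y‖ := real_inner_le_norm x y
  have hΓx : Γ * ‖x‖ ≤ ‖y‖ := by
    rcases (norm_nonneg x).eq_or_lt with hx | hx
    · simp [← hx]
    · nlinarith
  calc Γ * ⟪x, y⟫ ≤ Γ * (‖x‖ * ‖y‖) := mul_le_mul_of_nonneg_left hcs hΓ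
    _ = (Γ * ‖x‖) * ‖y‖ := by ring
    _ ≤ ‖y‖ * ‖y‖ := mul_le_mul_of_nonneg_right hΓx (norm_nonneg y)
    _ = ‖y‖ ^ 2 := by ring

theorem exists_inner_sub_smul_eq_zero (u x : E) : ∃ c : ℝ, ⟪u, x - c • u⟫ = 0 := by
  obtain ⟨c, hc⟩ := Submodule.mem_span_singleton.mp ((ℝ ∙ u).starProjection_apply_mem x)
  refine ⟨c, ?_⟩
  rw [hc, ← Submodule.mem_orthogonal_singleton_iff_inner_right]
  exact Submodule.sub_starProjection_mem_orthogonal x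

theorem mul_inner_le_norm_sq_of_gap {T : E →ₗ[ℝ] E} (hT : T.IsSymmetric) {u : E} (hTu : T u = 0)
    {Γ : ℝ} (hΓ : 0 ≤ Γ) (hgap : ∀ v, ⟪u, v⟫ = 0 → Γ * ‖v‖ ^ 2 ≤ ⟪v, T v⟫) (x : E) :
    Γ * ⟪x, T x⟫ ≤ ‖T x‖ ^ 2 := by
  obtain ⟨c, hc⟩ := exists_inner_sub_smul_eq_zero u x
  have hTv : T (x - c • u) = T x := by simp [hTu]
  have hinner : ⟪x - c • u, T x⟫ = ⟪x, T x⟫ := by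
    rw [inner_sub_left, real_inner_smul_left, ← hT u x, hTu, inner_zero_left, mul_zero, sub_zero]
  have := mul_inner_le_norm_sq_of_mul_norm_sq_le hΓ (hgap _ hc)
  rwa [hTv, hinner] at this

theorem inner_commutator_apply {H G : E →ₗ[ℝ] E} (hH : H.IsSymmetric) (hG : G.IsSymmetric)
    (x y : E) : ⟪(H ∘ₗ G - G ∘ₗ H) x, y⟫ = -⟪x, (H ∘ₗ G - G ∘ₗ H) y⟫ := by
  simp only [LinearMap.sub_apply, LinearMap.comp_apply, inner_sub_left, inner_sub_right, hH _ y,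
    hG _ y, hH x, hG x]
  ring

theorem inner_commutator_commutator_self {H G : E →ₗ[ℝ] E} (hH : H.IsSymmetric)
    (hG : G.IsSymmetric) (u : E) :
    ⟪u, (G ∘ₗ (H ∘ₗ G - G ∘ₗ H) - (H ∘ₗ G - G ∘ₗ H) ∘ₗ G) u⟫ =
      2 * ⟪G u, (H ∘ₗ G - G ∘ₗ H) u⟫ := by
  have hskew := inner_commutator_apply hH hG u (G u)
  rw [LinearMap.sub_apply, inner_sub_right, LinearMap.comp_apply, LinearMap.comp_apply, ← hG]
  rw [real_inner_comm] at hskew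
  linarith

end

theorem abstract_gap_bound_general {E : Type*} [NormedAddCommGroup E] [InnerProductSpace ℝ E]
    (H G : E →ₗ[ℝ] E)
    (hH : ∀ x y : E, ⟪H x, y⟫ = ⟪x, H y⟫)
    (hG : ∀ x y : E, ⟪G x, y⟫ = ⟪x, G y⟫)
    (u1 : E) (l1 l2 : ℝ)
    (h1 : H u1 = l1 • u1) (h12 : l1 ≤ l2)
    (h2 : ∀ v : E, ⟪u1, v⟫ = 0 → l2 * ‖v‖ ^ 2 ≤ ⟪v, H v⟫) :
    (l2 - l1) * ⟪u1, (G ∘ₗ (H ∘ₗ G - G ∘ₗ H) - (H ∘ₗ G - G ∘ₗ H) ∘ₗ G) u1⟫ ≤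
      2 * ‖(H ∘ₗ G - G ∘ₗ H) u1‖ ^ 2 := by
  set T : E →ₗ[ℝ] E := H - l1 • LinearMap.id
  have hT : T.IsSymmetric :=
    LinearMap.IsSymmetric.sub hH (LinearMap.IsSymmetric.id.smul (conj_trivial l1))
  have hTu : T u1 = 0 := by simp [T, h1]
  have hcomm : (H ∘ₗ G - G ∘ₗ H) u1 = T (G u1) := by simp [T, h1]
  have hgap : ∀ v, ⟪u1, v⟫ = 0 → (l2 - l1) * ‖v‖ ^ 2 ≤ ⟪v, T v⟫ := fun v hv => by
    have := h2 v hv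
    simp only [T, LinearMap.sub_apply, LinearMap.smul_apply, LinearMap.id_apply, inner_sub_right,
      real_inner_smul_right, real_inner_self_eq_norm_sq]
    linarith
  have key := mul_inner_le_norm_sq_of_gap hT hTu (sub_nonneg.mpr h12) hgap (G u1)
  rw [inner_commutator_commutator_self hH hG, hcomm]
  linarith

/-- Lemma 1.1: the abstract fundamental-gap bound
`Γ·⟨u_1, [G,[H,G]] u_1⟩ ≤ 2·‖[H,G] u_1‖²`, where `Γ = λ_2 − λ_1`, `u_1` is a normalized
eigenvector of `H` with eigenvalue `λ_1`, and `⟨v, H v⟩ ≥ λ_2 ‖v‖²` on the orthogonal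
complement of `u_1`. -/
theorem abstract_gap_bound {E : Type*} [NormedAddCommGroup E] [InnerProductSpace ℝ E]
    (H G : E →ₗ[ℝ] E)
    (hH : ∀ x y : E, ⟪H x, y⟫ = ⟪x, H y⟫)
    (hG : ∀ x y : E, ⟪G x, y⟫ = ⟪x, G y⟫)
    (u1 : E) (hu1 : ‖u1‖ = 1) (l1 l2 : ℝ)
    (h1 : H u1 = l1 • u1) (h12 : l1 ≤ l2)
    (h2 : ∀ v : E, ⟪u1, v⟫ = 0 → l2 * ‖v‖ ^ 2 ≤ ⟪v, H v⟫) :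
    (l2 - l1) * ⟪u1, (G ∘ₗ (H ∘ₗ G - G ∘ₗ H) - (H ∘ₗ G - G ∘ₗ H) ∘ₗ G) u1⟫ ≤
      2 * ‖(H ∘ₗ G - G ∘ₗ H) u1‖ ^ 2 :=
  abstract_gap_bound_general H G hH hG u1 l1 l2 h1 h12 h2
end

section
/- (Second-commutator sum rule.) For every index j ∈ ℕ, the family k ↦ (λ_k − λ_j)·⟨u_k, G u_j⟩² is summable and ⟨u_j, [G,[H,G]] u_j⟩ = 2·∑_{k∈ℕ} (λ_k − λ_j)·⟨u_k, G u_j⟩². -/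
open scoped RealInnerProductSpace

/-- Second-commutator sum rule: for bounded self-adjoint `H`, `G` on a real Hilbert space
with orthonormal basis `(u_k)` of eigenvectors of `H` (`H u_k = λ_k u_k`), for every `j`
the family `k ↦ (λ_k − λ_j)·⟨u_k, G u_j⟩²` is summable and
`⟨u_j, [G,[H,G]] u_j⟩ = 2·∑_k (λ_k − λ_j)·⟨u_k, G u_j⟩²`. -/
theorem second_commutator_sum_rule {E : Type*} [NormedAddCommGroup E]
    [InnerProductSpace ℝ E] [CompleteSpace E]
    (u : HilbertBasis ℕ ℝ E) (H G : E →L[ℝ] E)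
    (hH : ∀ x y : E, ⟪H x, y⟫ = ⟪x, H y⟫)
    (hG : ∀ x y : E, ⟪G x, y⟫ = ⟪x, G y⟫)
    (lam : ℕ → ℝ) (heig : ∀ k, H (u k) = lam k • u k) (j : ℕ) :
    Summable (fun k => (lam k - lam j) * ⟪u k, G (u j)⟫ ^ 2) ∧
    ⟪u j, (G ∘L (H ∘L G - G ∘L H) - (H ∘L G - G ∘L H) ∘L G) (u j)⟫ =
      2 * ∑' k, (lam k - lam j) * ⟪u k, G (u j)⟫ ^ 2 := by
  set v := G (u j) with hv
  have hs1 : Summable fun k => ⟪v, u k⟫ * ⟪u k, H v⟫ :=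
    u.summable_inner_mul_inner v (H v)
  have hs2 : Summable fun k => lam j * (⟪v, u k⟫ * ⟪u k, v⟫) :=
    (u.summable_inner_mul_inner v v).mul_left (lam j)
  have hpt : ∀ k, (lam k - lam j) * ⟪u k, v⟫ ^ 2
      = ⟪v, u k⟫ * ⟪u k, H v⟫ - lam j * (⟪v, u k⟫ * ⟪u k, v⟫) := by
    intro k
    have h1 : ⟪u k, H v⟫ = lam k * ⟪u k, v⟫ := by
      rw [← hH, heig, real_inner_smul_left]
    rw [h1, real_inner_comm v (u k)]
    ring
  have hsum : Summable (fun k => (lam k - lam j) * ⟪u k, v⟫ ^ 2) := by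
    simpa only [hpt] using hs1.sub hs2
  refine ⟨hsum, ?_⟩
  have htsum : ∑' k, (lam k - lam j) * ⟪u k, v⟫ ^ 2
      = ⟪v, H v⟫ - lam j * ⟪v, v⟫ := by
    calc ∑' k, (lam k - lam j) * ⟪u k, v⟫ ^ 2
        = ∑' k, (⟪v, u k⟫ * ⟪u k, H v⟫ - lam j * (⟪v, u k⟫ * ⟪u k, v⟫)) := by
          simp only [hpt]
      _ = (∑' k, ⟪v, u k⟫ * ⟪u k, H v⟫) - ∑' k, lam j * (⟪v, u k⟫ * ⟪u k, v⟫) :=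
          Summable.tsum_sub hs1 hs2
      _ = ⟪v, H v⟫ - lam j * ⟪v, v⟫ := by
          rw [u.tsum_inner_mul_inner v (H v), tsum_mul_left,
            u.tsum_inner_mul_inner v v]
  rw [htsum]
  have e1 : ⟪u j, G (H v)⟫ = ⟪v, H v⟫ := by rw [← hG]
  have e2 : ⟪u j, G (G (H (u j)))⟫ = lam j * ⟪v, v⟫ := by
    rw [heig, map_smul, map_smul, real_inner_smul_right, ← hG]
  have e3 : ⟪u j, H (G v)⟫ = lam j * ⟪v, v⟫ := by
    rw [← hH, heig, real_inner_smul_left, hG]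
  simp only [ContinuousLinearMap.sub_apply, ContinuousLinearMap.comp_apply, map_sub,
    inner_sub_right, ← hv, e1, e2, e3]
  ring
end

section
/- (Gap sum rule, abstract form of Eq. (4.4).) For every index j ∈ ℕ, the family k ↦ F(k) is summable and ⟨u_j, [G,[H,G]] u_j⟩ = 2·∑_{k∈ℕ} F(k), where F(k) := ⟨u_k, [H,G] u_j⟩² / (λ_k − λ_j) if λ_k ≠ λ_j, and F(k) := 0 if λ_k = λ_j. -/
open scoped RealInnerProductSpace

/-- Abstract form of the gap sum rule Eq. (4.4): with `F(k) = ⟨u_k, [H,G] u_j⟩²/(λ_k − λ_j)`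
for `λ_k ≠ λ_j` and `F(k) = 0` otherwise, the family `F` is summable and
`⟨u_j, [G,[H,G]] u_j⟩ = 2·∑_k F(k)`. -/
theorem gap_sum_rule {E : Type*} [NormedAddCommGroup E]
    [InnerProductSpace ℝ E] [CompleteSpace E]
    (u : HilbertBasis ℕ ℝ E) (H G : E →L[ℝ] E)
    (hH : ∀ x y : E, ⟪H x, y⟫ = ⟪x, H y⟫)
    (hG : ∀ x y : E, ⟪G x, y⟫ = ⟪x, G y⟫)
    (lam : ℕ → ℝ) (heig : ∀ k, H (u k) = lam k • u k) (j : ℕ)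
    (F : ℕ → ℝ)
    (hF : ∀ k, F k = if lam k = lam j then 0
      else ⟪u k, (H ∘L G - G ∘L H) (u j)⟫ ^ 2 / (lam k - lam j)) :
    Summable F ∧
    ⟪u j, (G ∘L (H ∘L G - G ∘L H) - (H ∘L G - G ∘L H) ∘L G) (u j)⟫ = 2 * ∑' k, F k := by
  set C : E →L[ℝ] E := H ∘L G - G ∘L H with hCdef
  have hCapp : ∀ x : E, C x = H (G x) - G (H x) := fun x => rfl
  have hkey : ∀ k : ℕ, ⟪u k, C (u j)⟫ = (lam k - lam j) * ⟪u k, G (u j)⟫ := by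
    intro k
    rw [hCapp, inner_sub_right]
    have h1 : ⟪u k, H (G (u j))⟫ = lam k * ⟪u k, G (u j)⟫ := by
      rw [← hH, heig, inner_smul_left]
      simp
    have h2 : ⟪u k, G (H (u j))⟫ = lam j * ⟪u k, G (u j)⟫ := by
      rw [heig, map_smul, inner_smul_right, ← hG, real_inner_comm]
    rw [h1, h2]; ring
  have hFk : ∀ k : ℕ, F k = ⟪G (u j), u k⟫ * ⟪u k, C (u j)⟫ := by
    intro k
    rw [hF k]
    by_cases h : lam k = lam j
    · rw [if_pos h, hkey, h]
      simp
    · rw [if_neg h, hkey]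
      have hne : lam k - lam j ≠ 0 := sub_ne_zero.mpr h
      rw [real_inner_comm (G (u j)) (u k)]
      field_simp
  have hsum : Summable F := by
    have := u.summable_inner_mul_inner (G (u j)) (C (u j))
    exact this.congr fun k => (hFk k).symm
  have htsum : ∑' k, F k = ⟪G (u j), C (u j)⟫ := by
    rw [tsum_congr hFk, u.tsum_inner_mul_inner]
  refine ⟨hsum, ?_⟩
  have hC : ∀ x y : E, ⟪C x, y⟫ = -⟪x, C y⟫ := by
    intro x y
    rw [hCapp, hCapp, inner_sub_left, inner_sub_right, hH (G x) y, hG x (H y), hG (H x) y, hH x (G y)]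
    ring
  have hL : ((G ∘L C - C ∘L G) (u j)) = G (C (u j)) - C (G (u j)) := rfl
  rw [hL, inner_sub_right, ← hG, htsum]
  have : ⟪u j, C (G (u j))⟫ = -⟪G (u j), C (u j)⟫ := by
    rw [← hC, real_inner_comm]
  rw [this]; ring
end

section
/- (Corollary 2.2, gap bound for a closed curve.) Let ν ≥ 2, L > 0, and let γ : ℝ → ℝ^ν be a C², L-periodic curve parametrized by arc length (‖γ'(s)‖ = 1 for all s). Let V : ℝ → ℝ be continuous and L-periodic. Suppose u_1 : ℝ → ℝ is C², L-periodic, satisfies −u_1''(s) + V(s) u_1(s) = λ_1 u_1(s) for all s and ∫_0^L u_1(s)² ds = 1, and suppose λ_2 ∈ ℝ is such that every C², L-periodic φ : ℝ → ℝ with ∫_0^L φ(s) u_1(s) ds = 0 satisfies ∫_0^L (φ'(s)² + V(s) φ(s)²) ds ≥ λ_2 ∫_0^L φ(s)² ds. Then λ_2 − λ_1 ≤ 4 ∫_0^L ( u_1'(s)² + (‖γ''(s)‖²/4)·u_1(s)² ) ds. -/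
/-!
Test the variational characterisation of `λ₂` with `φᵢ = u₁ (γᵢ - cᵢ)`, where the centre
`c = ∫ u₁² γ` makes every `φᵢ` orthogonal to `u₁`. The ground-state substitution turns the energy
of `φᵢ` into `λ₁ ∫ φᵢ² + ∫ u₁² γᵢ'²`, so summing over `i` and using `‖γ'‖ = 1` gives
`(λ₂ - λ₁) X ≤ 1` with `X = ∫ ‖u₁ (γ - c)‖²`. Integrating `(u₁² ⟪γ - c, γ'⟫)'` over a period gives
`∫ ⟪u₁ (γ - c), u₁ γ'' + 2 u₁' γ'⟫ = -∫ u₁² ‖γ'‖² = -1`, and since `γ' ⊥ γ''` the second vector has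
squared norm `4 (u₁'² + κ² u₁² / 4)`. Integrating `0 ≤ ‖t u₁ (γ - c) + u₁ γ'' + 2 u₁' γ'‖²` with
`t = λ₂ - λ₁` then gives `2t ≤ t² X + 4 ∫ (u₁'² + κ² u₁² / 4) ≤ t + 4 ∫ (u₁'² + κ² u₁² / 4)`.
-/

open MeasureTheory intervalIntegral Function
open scoped RealInnerProductSpace

theorem Function.Periodic.deriv {E : Type*} [NormedAddCommGroup E] [NormedSpace ℝ E]
    {f : ℝ → E} {L : ℝ} (h : Periodic f L) : Periodic (deriv f) L := fun x => by
  rw [← deriv_comp_add_const, h.funext]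

theorem integral_eq_zero_of_hasDerivAt_of_periodic {E : Type*} [NormedAddCommGroup E]
    [NormedSpace ℝ E] [CompleteSpace E] {F F' : ℝ → E} {L : ℝ}
    (hF : ∀ s, HasDerivAt F (F' s) s) (hF' : Continuous F') (hper : Periodic F L) :
    ∫ s in (0:ℝ)..L, F' s = 0 := by
  rw [integral_eq_sub_of_hasDerivAt (fun s _ => hF s) (hF'.intervalIntegrable _ _),
    ← zero_add L, hper, sub_self]

-- Ground-state substitution `φ = u g`; the boundary term `u u' g²` vanishes by periodicity.
theorem integral_sq_deriv_mul_add_potential_eq {g u V : ℝ → ℝ} {L lam : ℝ}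
    (hg : ContDiff ℝ 1 g) (hgper : Periodic g L) (hu : ContDiff ℝ 2 u) (huper : Periodic u L)
    (hV : Continuous V) (heig : ∀ s, -deriv (deriv u) s + V s * u s = lam * u s) :
    ∫ s in (0:ℝ)..L, (deriv (fun t => u t * g t) s ^ 2 + V s * (u s * g s) ^ 2) =
      (∫ s in (0:ℝ)..L, (u s * deriv g s) ^ 2) + lam * ∫ s in (0:ℝ)..L, (u s * g s) ^ 2 := by
  have hg' : ∀ s, HasDerivAt g (deriv g s) s := fun s =>
    (hg.differentiable one_ne_zero s).hasDerivAt
  have hu' : ∀ s, HasDerivAt u (deriv u s) s := fun s =>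
    (hu.differentiable two_ne_zero s).hasDerivAt
  have hu'' : ∀ s, HasDerivAt (deriv u) ((V s - lam) * u s) s := fun s =>
    ((hu.deriv' (n := 1)).differentiable one_ne_zero s).hasDerivAt.congr_deriv
      (by linear_combination -heig s)
  have hcu' : Continuous (deriv u) := hu.continuous_deriv one_le_two
  have hF : ∀ s, HasDerivAt (fun t => g t ^ 2 * (u t * deriv u t))
      (2 * g s * deriv g s * (u s * deriv u s) +
        g s ^ 2 * (deriv u s ^ 2 + u s * ((V s - lam) * u s))) s := fun s =>
    (((hg' s).fun_pow 2).fun_mul ((hu' s).fun_mul (hu'' s))).congr_deriv (by ring)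
  have hF0 := integral_eq_zero_of_hasDerivAt_of_periodic (L := L) hF (by fun_prop)
    (fun s => by simp only [hgper s, huper s, huper.deriv s])
  have hpt : ∀ s, deriv (fun t => u t * g t) s ^ 2 + V s * (u s * g s) ^ 2 =
      ((u s * deriv g s) ^ 2 + lam * (u s * g s) ^ 2) +
        (2 * g s * deriv g s * (u s * deriv u s) +
          g s ^ 2 * (deriv u s ^ 2 + u s * ((V s - lam) * u s))) := fun s => by
    rw [((hu' s).fun_mul (hg' s)).deriv]
    ring
  simp only [hpt]
  rw [intervalIntegral.integral_add (Continuous.intervalIntegrable (by fun_prop) _ _)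
      (Continuous.intervalIntegrable (by fun_prop) _ _), hF0, add_zero,
    intervalIntegral.integral_add (Continuous.intervalIntegrable (by fun_prop) _ _)
      (Continuous.intervalIntegrable (by fun_prop) _ _), intervalIntegral.integral_const_mul]

theorem sub_mul_integral_sq_mul_sub_le {g u V : ℝ → ℝ} {L lam1 lam2 : ℝ}
    (hg : ContDiff ℝ 2 g) (hgper : Periodic g L) (hu : ContDiff ℝ 2 u) (huper : Periodic u L)
    (hV : Continuous V) (heig : ∀ s, -deriv (deriv u) s + V s * u s = lam1 * u s)
    (hnorm : ∫ s in (0:ℝ)..L, u s ^ 2 = 1)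
    (hlam2 : ∀ φ : ℝ → ℝ, ContDiff ℝ 2 φ → Periodic φ L → (∫ s in (0:ℝ)..L, φ s * u s) = 0 →
      lam2 * ∫ s in (0:ℝ)..L, φ s ^ 2 ≤ ∫ s in (0:ℝ)..L, (deriv φ s ^ 2 + V s * φ s ^ 2)) :
    (lam2 - lam1) * ∫ s in (0:ℝ)..L, (u s * (g s - ∫ t in (0:ℝ)..L, u t ^ 2 * g t)) ^ 2 ≤
      ∫ s in (0:ℝ)..L, (u s * deriv g s) ^ 2 := by
  set c := ∫ t in (0:ℝ)..L, u t ^ 2 * g t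
  have hgc : ContDiff ℝ 2 fun s => g s - c := hg.sub contDiff_const
  have horth : ∫ s in (0:ℝ)..L, u s * (g s - c) * u s = 0 := by
    have hpt : ∀ s, u s * (g s - c) * u s = u s ^ 2 * g s - c * u s ^ 2 := fun s => by ring
    simp only [hpt]
    rw [intervalIntegral.integral_sub (Continuous.intervalIntegrable (by fun_prop) _ _)
      (Continuous.intervalIntegrable (by fun_prop) _ _), intervalIntegral.integral_const_mul,
      hnorm, mul_one, sub_self]
  have h := hlam2 _ (hu.mul hgc) (fun s => by simp only [hgper s, huper s]) horth
  rw [integral_sq_deriv_mul_add_potential_eq (hgc.of_le one_le_two) (fun s => by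
    simp only [hgper s]) hu huper hV heig] at h
  simp only [deriv_sub_const] at h
  linarith

theorem EuclideanSpace.intervalIntegral_apply {ι : Type*} [Fintype ι] {f : ℝ → EuclideanSpace ℝ ι}
    {a b : ℝ} (hf : IntervalIntegrable f volume a b) (i : ι) :
    (∫ s in a..b, f s) i = ∫ s in a..b, f s i :=
  ((EuclideanSpace.proj i).intervalIntegral_comp_comm hf).symm

theorem EuclideanSpace.deriv_apply {ι : Type*} [Fintype ι] {f : ℝ → EuclideanSpace ℝ ι}
    {s : ℝ} (hf : DifferentiableAt ℝ f s) (i : ι) :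
    deriv (fun t => f t i) s = deriv f s i :=
  ((EuclideanSpace.proj (𝕜 := ℝ) i).hasFDerivAt.comp_hasDerivAt s hf.hasDerivAt).deriv

theorem sub_mul_integral_norm_sq_smul_sub_le {ι : Type*} [Fintype ι] {γ : ℝ → EuclideanSpace ℝ ι}
    {u V : ℝ → ℝ} {L lam1 lam2 : ℝ}
    (hγ : ContDiff ℝ 2 γ) (hγper : Periodic γ L) (hu : ContDiff ℝ 2 u) (huper : Periodic u L)
    (hV : Continuous V) (heig : ∀ s, -deriv (deriv u) s + V s * u s = lam1 * u s)
    (hnorm : ∫ s in (0:ℝ)..L, u s ^ 2 = 1)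
    (hlam2 : ∀ φ : ℝ → ℝ, ContDiff ℝ 2 φ → Periodic φ L → (∫ s in (0:ℝ)..L, φ s * u s) = 0 →
      lam2 * ∫ s in (0:ℝ)..L, φ s ^ 2 ≤ ∫ s in (0:ℝ)..L, (deriv φ s ^ 2 + V s * φ s ^ 2)) :
    (lam2 - lam1) * ∫ s in (0:ℝ)..L, ‖u s • (γ s - ∫ t in (0:ℝ)..L, u t ^ 2 • γ t)‖ ^ 2 ≤
      ∫ s in (0:ℝ)..L, ‖u s • deriv γ s‖ ^ 2 := by
  have hcγ' : Continuous (deriv γ) := hγ.continuous_deriv one_le_two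
  simp only [EuclideanSpace.real_norm_sq_eq, PiLp.smul_apply, PiLp.sub_apply, smul_eq_mul]
  rw [integral_finsetSum fun i _ => Continuous.intervalIntegrable (by fun_prop) _ _,
    integral_finsetSum fun i _ => Continuous.intervalIntegrable (by fun_prop) _ _, Finset.mul_sum]
  gcongr with i
  have hγi : ContDiff ℝ 2 fun s => γ s i := (EuclideanSpace.proj (𝕜 := ℝ) i).contDiff.comp hγ
  have h := sub_mul_integral_sq_mul_sub_le hγi (fun s => by simp only [hγper s]) hu huper hV heig
    hnorm hlam2
  rw [EuclideanSpace.intervalIntegral_apply (Continuous.intervalIntegrable (by fun_prop) _ _)]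
  simpa only [PiLp.smul_apply, smul_eq_mul,
    EuclideanSpace.deriv_apply (hγ.differentiable two_ne_zero _)] using h

theorem integral_inner_smul_sub_eq_neg_integral_norm_sq_smul_deriv {E : Type*}
    [NormedAddCommGroup E] [InnerProductSpace ℝ E] {γ : ℝ → E} {u : ℝ → ℝ} {L : ℝ}
    (hγ : ContDiff ℝ 2 γ) (hγper : Periodic γ L) (hu : ContDiff ℝ 1 u) (huper : Periodic u L) (c : E) :
    ∫ s in (0:ℝ)..L, ⟪u s • (γ s - c), u s • deriv (deriv γ) s + (2 * deriv u s) • deriv γ s⟫ =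
      -∫ s in (0:ℝ)..L, ‖u s • deriv γ s‖ ^ 2 := by
  have hγ' : ∀ s, HasDerivAt γ (deriv γ s) s := fun s =>
    (hγ.differentiable two_ne_zero s).hasDerivAt
  have hγ'' : ∀ s, HasDerivAt (deriv γ) (deriv (deriv γ) s) s := fun s =>
    ((hγ.deriv' (n := 1)).differentiable one_ne_zero s).hasDerivAt
  have hu' : ∀ s, HasDerivAt u (deriv u s) s := fun s =>
    (hu.differentiable one_ne_zero s).hasDerivAt
  have hcγ' : Continuous (deriv γ) := hγ.continuous_deriv one_le_two
  have hF : ∀ s, HasDerivAt (fun t => u t ^ 2 * ⟪γ t - c, deriv γ t⟫)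
      (‖u s • deriv γ s‖ ^ 2 +
        ⟪u s • (γ s - c), u s • deriv (deriv γ) s + (2 * deriv u s) • deriv γ s⟫) s := fun s =>
    (((hu' s).fun_pow 2).fun_mul (((hγ' s).sub_const c).inner ℝ (hγ'' s))).congr_deriv (by
      simp only [inner_add_right, inner_smul_left, inner_smul_right, norm_smul,
        real_inner_self_eq_norm_sq, Real.norm_eq_abs, mul_pow, sq_abs, RCLike.conj_to_real]
      ring)
  have hF0 := integral_eq_zero_of_hasDerivAt_of_periodic (L := L) hF (by fun_prop)
    (fun s => by simp only [hγper s, huper s, hγper.deriv s])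
  rw [intervalIntegral.integral_add (Continuous.intervalIntegrable (by fun_prop) _ _)
    (Continuous.intervalIntegrable (by fun_prop) _ _)] at hF0
  linarith

theorem inner_deriv_eq_zero_of_norm_eq {E : Type*} [NormedAddCommGroup E] [InnerProductSpace ℝ E]
    {f : ℝ → E} {r : ℝ} (hf : Differentiable ℝ f) (hnorm : ∀ s, ‖f s‖ = r) (s : ℝ) :
    ⟪f s, deriv f s⟫ = 0 := by
  have h := (hf s).hasDerivAt.norm_sq
  simp only [hnorm] at h
  have := h.unique (hasDerivAt_const s (r ^ 2))
  linarith

theorem neg_two_mul_integral_inner_le {E : Type*} [NormedAddCommGroup E] [InnerProductSpace ℝ E]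
    {a b : ℝ → E} (ha : Continuous a) (hb : Continuous b) {x y : ℝ} (hxy : x ≤ y) (t : ℝ) :
    -(2 * t * ∫ s in x..y, ⟪a s, b s⟫) ≤
      t ^ 2 * (∫ s in x..y, ‖a s‖ ^ 2) + ∫ s in x..y, ‖b s‖ ^ 2 := by
  have hpt : ∀ s, -(2 * t * ⟪a s, b s⟫) ≤ t ^ 2 * ‖a s‖ ^ 2 + ‖b s‖ ^ 2 := fun s => by
    have h := norm_add_sq_real (t • a s) (b s)
    rw [norm_smul, inner_smul_left, Real.norm_eq_abs, mul_pow, sq_abs,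
      RCLike.conj_to_real] at h
    linarith [sq_nonneg ‖t • a s + b s‖]
  rw [← intervalIntegral.integral_const_mul, ← intervalIntegral.integral_neg,
    ← intervalIntegral.integral_const_mul, ← intervalIntegral.integral_add
      (Continuous.intervalIntegrable (by fun_prop) _ _)
      (Continuous.intervalIntegrable (by fun_prop) _ _)]
  exact intervalIntegral.integral_mono_on hxy (Continuous.intervalIntegrable (by fun_prop) _ _)
    (Continuous.intervalIntegrable (by fun_prop) _ _) fun s _ => hpt s

theorem norm_sq_smul_deriv_add_smul_of_norm_eq_one {E : Type*} [NormedAddCommGroup E]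
    [InnerProductSpace ℝ E] {f : ℝ → E} (hf : Differentiable ℝ f) (hnorm : ∀ s, ‖f s‖ = 1)
    (x y s : ℝ) : ‖x • deriv f s + y • f s‖ ^ 2 = x ^ 2 * ‖deriv f s‖ ^ 2 + y ^ 2 := by
  have horth : ⟪x • deriv f s, y • f s⟫ = 0 := by
    rw [inner_smul_left, inner_smul_right, real_inner_comm,
      inner_deriv_eq_zero_of_norm_eq hf hnorm s, mul_zero, mul_zero]
  rw [norm_add_sq_real, horth, norm_smul, norm_smul, hnorm, mul_one, mul_pow, Real.norm_eq_abs,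
    Real.norm_eq_abs, sq_abs, sq_abs, mul_zero, add_zero]

theorem le_of_mul_le_one_of_two_mul_le {t X Y : ℝ} (hY : 0 ≤ Y) (hX : t * X ≤ 1)
    (h : 2 * t ≤ t ^ 2 * X + Y) : t ≤ Y := by
  rcases le_or_gt t 0 with ht | ht
  · linarith
  · nlinarith

theorem gap_bound_closed_curve_general {ν : ℕ} (L : ℝ) (hL : 0 < L)
    (γ : ℝ → EuclideanSpace ℝ (Fin ν)) (hγ : ContDiff ℝ 2 γ)
    (hγper : ∀ s : ℝ, γ (s + L) = γ s) (harc : ∀ s : ℝ, ‖deriv γ s‖ = 1)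
    (V : ℝ → ℝ) (hV : Continuous V)
    (u1 : ℝ → ℝ) (lam1 lam2 : ℝ)
    (hu1 : ContDiff ℝ 2 u1) (hu1per : ∀ s : ℝ, u1 (s + L) = u1 s)
    (heig : ∀ s : ℝ, -deriv (deriv u1) s + V s * u1 s = lam1 * u1 s)
    (hnorm : ∫ s in (0:ℝ)..L, (u1 s) ^ 2 = 1)
    (hlam2 : ∀ φ : ℝ → ℝ, ContDiff ℝ 2 φ → (∀ s : ℝ, φ (s + L) = φ s) →
      (∫ s in (0:ℝ)..L, φ s * u1 s) = 0 →
      lam2 * ∫ s in (0:ℝ)..L, (φ s) ^ 2 ≤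
        ∫ s in (0:ℝ)..L, ((deriv φ s) ^ 2 + V s * (φ s) ^ 2)) :
    lam2 - lam1 ≤
      4 * ∫ s in (0:ℝ)..L,
        ((deriv u1 s) ^ 2 + (‖deriv (deriv γ) s‖ ^ 2 / 4) * (u1 s) ^ 2) := by
  have hcγ' : Continuous (deriv γ) := hγ.continuous_deriv one_le_two
  have hcu1' : Continuous (deriv u1) := hu1.continuous_deriv one_le_two
  have hunit : ∫ s in (0:ℝ)..L, ‖u1 s • deriv γ s‖ ^ 2 = 1 := by
    simpa only [norm_smul, harc, mul_one, Real.norm_eq_abs, sq_abs] using hnorm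
  have hvar := sub_mul_integral_norm_sq_smul_sub_le hγ hγper hu1 hu1per hV heig hnorm hlam2
  set c := ∫ t in (0:ℝ)..L, u1 t ^ 2 • γ t
  have hb : ∀ s, ‖u1 s • deriv (deriv γ) s + (2 * deriv u1 s) • deriv γ s‖ ^ 2 =
      4 * ((deriv u1 s) ^ 2 + (‖deriv (deriv γ) s‖ ^ 2 / 4) * (u1 s) ^ 2) := fun s => by
    rw [norm_sq_smul_deriv_add_smul_of_norm_eq_one
      ((hγ.deriv' (n := 1)).differentiable one_ne_zero) harc]
    ring
  have hamgm := neg_two_mul_integral_inner_le (a := fun s => u1 s • (γ s - c))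
    (b := fun s => u1 s • deriv (deriv γ) s + (2 * deriv u1 s) • deriv γ s) (by fun_prop)
    (by fun_prop) hL.le (lam2 - lam1)
  rw [integral_inner_smul_sub_eq_neg_integral_norm_sq_smul_deriv hγ hγper
    (hu1.of_le one_le_two) hu1per c, hunit] at hamgm
  simp only [hb, intervalIntegral.integral_const_mul] at hamgm
  rw [hunit] at hvar
  refine le_of_mul_le_one_of_two_mul_le (mul_nonneg zero_le_four
    (intervalIntegral.integral_nonneg hL.le fun s _ => by positivity)) hvar ?_
  linarith

/-- Corollary 2.2 (gap bound for a closed curve): for `H = −d²/ds² + V` on a closed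
`C²` arc-length-parametrized curve of length `L`, with normalized ground state `u₁`
of eigenvalue `λ₁` and `λ₂` characterized variationally on the orthogonal complement
of `u₁`, the gap satisfies `λ₂ − λ₁ ≤ 4 ∫₀ᴸ (u₁'² + (κ²/4) u₁²) ds`. -/
theorem gap_bound_closed_curve {ν : ℕ} (hν : 2 ≤ ν) (L : ℝ) (hL : 0 < L)
    (γ : ℝ → EuclideanSpace ℝ (Fin ν)) (hγ : ContDiff ℝ 2 γ)
    (hγper : ∀ s : ℝ, γ (s + L) = γ s) (harc : ∀ s : ℝ, ‖deriv γ s‖ = 1)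
    (V : ℝ → ℝ) (hV : Continuous V) (hVper : ∀ s : ℝ, V (s + L) = V s)
    (u1 : ℝ → ℝ) (lam1 lam2 : ℝ)
    (hu1 : ContDiff ℝ 2 u1) (hu1per : ∀ s : ℝ, u1 (s + L) = u1 s)
    (heig : ∀ s : ℝ, -deriv (deriv u1) s + V s * u1 s = lam1 * u1 s)
    (hnorm : ∫ s in (0:ℝ)..L, (u1 s) ^ 2 = 1)
    (hlam2 : ∀ φ : ℝ → ℝ, ContDiff ℝ 2 φ → (∀ s : ℝ, φ (s + L) = φ s) →
      (∫ s in (0:ℝ)..L, φ s * u1 s) = 0 →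
      lam2 * ∫ s in (0:ℝ)..L, (φ s) ^ 2 ≤
        ∫ s in (0:ℝ)..L, ((deriv φ s) ^ 2 + V s * (φ s) ^ 2)) :
    lam2 - lam1 ≤
      4 * ∫ s in (0:ℝ)..L,
        ((deriv u1 s) ^ 2 + (‖deriv (deriv γ) s‖ ^ 2 / 4) * (u1 s) ^ 2) :=
  gap_bound_closed_curve_general L hL γ hγ hγper harc V hV u1 lam1 lam2 hu1 hu1per heig hnorm hlam2
end

section
/- (Abstract Hile–Protter inequality, cf. Corollary 4.2.) Suppose in addition that the sequence (λ_k) is nondecreasing, and let n ≥ 1 be such that λ_j < λ_n for every j < n. Then ∑_{j=0}^{n−1} ⟨u_j, [G,[H,G]] u_j⟩ ≤ 2·∑_{j=0}^{n−1} ‖[H,G] u_j‖² / (λ_n − λ_j). -/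
open scoped RealInnerProductSpace

/-- Abstract Hile–Protter-type inequality (cf. Corollary 4.2): if the eigenvalue sequence
`(λ_k)` is nondecreasing and `λ_j < λ_n` for all `j < n`, then
`∑_{j<n} ⟨u_j, [G,[H,G]] u_j⟩ ≤ 2·∑_{j<n} ‖[H,G] u_j‖²/(λ_n − λ_j)`. -/
theorem abstract_hile_protter {E : Type*} [NormedAddCommGroup E]
    [InnerProductSpace ℝ E] [CompleteSpace E]
    (u : HilbertBasis ℕ ℝ E) (H G : E →L[ℝ] E)
    (hH : ∀ x y : E, ⟪H x, y⟫ = ⟪x, H y⟫)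
    (hG : ∀ x y : E, ⟪G x, y⟫ = ⟪x, G y⟫)
    (lam : ℕ → ℝ) (heig : ∀ k, H (u k) = lam k • u k)
    (hmono : Monotone lam) (n : ℕ) (hn : 1 ≤ n)
    (hgap : ∀ j < n, lam j < lam n) :
    ∑ j ∈ Finset.range n,
        ⟪u j, (G ∘L (H ∘L G - G ∘L H) - (H ∘L G - G ∘L H) ∘L G) (u j)⟫ ≤
      2 * ∑ j ∈ Finset.range n,
        ‖(H ∘L G - G ∘L H) (u j)‖ ^ 2 / (lam n - lam j) := by
  set T : E →L[ℝ] E := H ∘L G - G ∘L H with hTdef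
  set a : ℕ → ℕ → ℝ := fun j k => ⟪u k, G (u j)⟫ with hadef
  -- symmetry of the matrix of G
  have hasymm : ∀ j k, a j k = a k j := by
    intro j k
    simp only [hadef]
    rw [← hG, real_inner_comm]
  -- T is anti-self-adjoint
  have hTanti : ∀ x y : E, ⟪T x, y⟫ = -⟪x, T y⟫ := by
    intro x y
    simp only [hTdef, ContinuousLinearMap.sub_apply, ContinuousLinearMap.comp_apply,
      inner_sub_left, inner_sub_right]
    rw [hH (G x) y, hG x (H y), hG (H x) y, hH x (G y)]
    ring
  -- matrix elements of T
  have hT : ∀ j k, ⟪u k, T (u j)⟫ = (lam k - lam j) * a j k := by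
    intro j k
    simp only [hTdef, ContinuousLinearMap.sub_apply, ContinuousLinearMap.comp_apply,
      inner_sub_right]
    rw [heig j, map_smul, real_inner_smul_right, ← hH, heig k, real_inner_smul_left]
    simp only [hadef]
    ring
  have haG : ∀ j k, ⟪G (u j), u k⟫ = a j k := fun j k => real_inner_comm _ _
  have hT' : ∀ j k, ⟪T (u j), u k⟫ = (lam k - lam j) * a j k := fun j k => by
    rw [real_inner_comm, hT]
  have hGT : ∀ j, ⟪G (u j), T (u j)⟫ = ∑' k, (lam k - lam j) * a j k ^ 2 := by
    intro j
    rw [← u.tsum_inner_mul_inner (G (u j)) (T (u j))]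
    refine tsum_congr fun k => ?_
    rw [hT j k, haG j k]
    ring
  have hNorm : ∀ j, ‖T (u j)‖ ^ 2 = ∑' k, (lam k - lam j) ^ 2 * a j k ^ 2 := by
    intro j
    rw [← real_inner_self_eq_norm_sq, ← u.tsum_inner_mul_inner (T (u j)) (T (u j))]
    refine tsum_congr fun k => ?_
    rw [hT j k, hT' j k]
    ring
  -- summability
  have hsum1 : ∀ j, Summable fun k => (lam k - lam j) * a j k ^ 2 := by
    intro j
    refine (u.summable_inner_mul_inner (G (u j)) (T (u j))).congr fun k => ?_
    rw [hT j k, haG j k]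
    ring
  have hsum2 : ∀ j, Summable fun k => (lam k - lam j) ^ 2 * a j k ^ 2 := by
    intro j
    refine (u.summable_inner_mul_inner (T (u j)) (T (u j))).congr fun k => ?_
    rw [hT j k, hT' j k]
    ring
  -- diagonal entries of the double commutator
  have hdiag : ∀ j, ⟪u j, (G ∘L T - T ∘L G) (u j)⟫ = 2 * ⟪G (u j), T (u j)⟫ := by
    intro j
    simp only [ContinuousLinearMap.sub_apply, ContinuousLinearMap.comp_apply, inner_sub_right]
    rw [← hG (u j) (T (u j))]
    have h1 : ⟪T (u j), G (u j)⟫ = -⟪u j, T (G (u j))⟫ := hTanti _ _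
    have h2 : ⟪T (u j), G (u j)⟫ = ⟪G (u j), T (u j)⟫ := real_inner_comm _ _
    linarith
  -- core inequality
  have key : ∑ j ∈ Finset.range n, (∑' k, (lam k - lam j) * a j k ^ 2) ≤
      ∑ j ∈ Finset.range n, (∑' k, (lam k - lam j) ^ 2 * a j k ^ 2 / (lam n - lam j)) := by
    have hsplit1 : ∀ j, (∑' k, (lam k - lam j) * a j k ^ 2) =
        (∑ k ∈ Finset.range n, (lam k - lam j) * a j k ^ 2) +
          ∑' k : ↑((Finset.range n : Finset ℕ) : Set ℕ)ᶜ,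
            (lam (k : ℕ) - lam j) * a j (k : ℕ) ^ 2 :=
      fun j => (Summable.sum_add_tsum_compl (hsum1 j)).symm
    -- the finite double sum vanishes by antisymmetry
    have hzero : ∑ j ∈ Finset.range n, ∑ k ∈ Finset.range n,
        (lam k - lam j) * a j k ^ 2 = 0 := by
      have hneg : (∑ j ∈ Finset.range n, ∑ k ∈ Finset.range n, (lam k - lam j) * a j k ^ 2)
          = -∑ j ∈ Finset.range n, ∑ k ∈ Finset.range n, (lam k - lam j) * a j k ^ 2 := by
        conv_lhs => rw [Finset.sum_comm]
        rw [← Finset.sum_neg_distrib]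
        refine Finset.sum_congr rfl fun k _ => ?_
        rw [← Finset.sum_neg_distrib]
        refine Finset.sum_congr rfl fun j _ => ?_
        rw [hasymm j k]
        ring
      linarith
    calc ∑ j ∈ Finset.range n, (∑' k, (lam k - lam j) * a j k ^ 2)
        = ∑ j ∈ Finset.range n, ((∑ k ∈ Finset.range n, (lam k - lam j) * a j k ^ 2) +
            ∑' k : ↑((Finset.range n : Finset ℕ) : Set ℕ)ᶜ,
              (lam (k : ℕ) - lam j) * a j (k : ℕ) ^ 2) :=
          Finset.sum_congr rfl fun j _ => hsplit1 j
      _ = ∑ j ∈ Finset.range n, ∑' k : ↑((Finset.range n : Finset ℕ) : Set ℕ)ᶜ,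
              (lam (k : ℕ) - lam j) * a j (k : ℕ) ^ 2 := by
          rw [Finset.sum_add_distrib, hzero, zero_add]
      _ ≤ ∑ j ∈ Finset.range n, ∑' k : ↑((Finset.range n : Finset ℕ) : Set ℕ)ᶜ,
              (lam (k : ℕ) - lam j) ^ 2 * a j (k : ℕ) ^ 2 / (lam n - lam j) := by
          refine Finset.sum_le_sum fun j hj => ?_
          have hjn : j < n := Finset.mem_range.mp hj
          have hq : 0 < lam n - lam j := sub_pos.mpr (hgap j hjn)
          refine Summable.tsum_le_tsum (fun k => ?_) ((hsum1 j).subtype _)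
            (((hsum2 j).div_const _).subtype _)
          have hkn : n ≤ (k : ℕ) := by
            have := k.2
            simp only [Set.mem_compl_iff, Finset.coe_range, Set.mem_Iio, not_lt] at this
            exact this
          have hp : lam n - lam j ≤ lam (k : ℕ) - lam j := by
            have := hmono hkn; linarith
          rw [le_div_iff₀ hq]
          nlinarith [sq_nonneg (a j (k : ℕ)), mul_nonneg (mul_nonneg hq.le
            (sq_nonneg (a j (k : ℕ)))) (sub_nonneg.mpr hp)]
      _ ≤ ∑ j ∈ Finset.range n,
            (∑' k, (lam k - lam j) ^ 2 * a j k ^ 2 / (lam n - lam j)) := by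
          refine Finset.sum_le_sum fun j hj => ?_
          have hjn : j < n := Finset.mem_range.mp hj
          have hq : 0 < lam n - lam j := sub_pos.mpr (hgap j hjn)
          have hsplit2 := Summable.sum_add_tsum_compl (s := Finset.range n) ((hsum2 j).div_const
            (lam n - lam j))
          have hfin : 0 ≤ ∑ k ∈ Finset.range n,
              (lam k - lam j) ^ 2 * a j k ^ 2 / (lam n - lam j) :=
            Finset.sum_nonneg fun k _ => div_nonneg
              (mul_nonneg (sq_nonneg _) (sq_nonneg _)) hq.le
          linarith [hsplit2]
  -- assemble
  calc ∑ j ∈ Finset.range n, ⟪u j, (G ∘L T - T ∘L G) (u j)⟫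
      = 2 * ∑ j ∈ Finset.range n, (∑' k, (lam k - lam j) * a j k ^ 2) := by
        rw [Finset.mul_sum]
        refine Finset.sum_congr rfl fun j _ => ?_
        rw [hdiag j, hGT j]
    _ ≤ 2 * ∑ j ∈ Finset.range n,
          (∑' k, (lam k - lam j) ^ 2 * a j k ^ 2 / (lam n - lam j)) := by linarith
    _ = 2 * ∑ j ∈ Finset.range n, ‖T (u j)‖ ^ 2 / (lam n - lam j) := by
        congr 1
        refine Finset.sum_congr rfl fun j _ => ?_
        rw [hNorm j, tsum_div_const]
end

section
/- (Abstract Yang-type inequality, cf. Corollary 4.4.) Let n ≥ 1 and let z ∈ ℝ be such that λ_j < z for every j < n and λ_k ≥ z for every k ≥ n. Then ∑_{j=0}^{n−1} (z − λ_j)²·⟨u_j, [G,[H,G]] u_j⟩ ≤ 2·∑_{j=0}^{n−1} (z − λ_j)·‖[H,G] u_j‖². -/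
open scoped RealInnerProductSpace

/-- Abstract Yang-type inequality (cf. Corollary 4.4): if `λ_j < z` for `j < n` and
`λ_k ≥ z` for `k ≥ n`, then
`∑_{j<n} (z − λ_j)²·⟨u_j, [G,[H,G]] u_j⟩ ≤ 2·∑_{j<n} (z − λ_j)·‖[H,G] u_j‖²`. -/
theorem abstract_yang_inequality {E : Type*} [NormedAddCommGroup E]
    [InnerProductSpace ℝ E] [CompleteSpace E]
    (u : HilbertBasis ℕ ℝ E) (H G : E →L[ℝ] E)
    (hH : ∀ x y : E, ⟪H x, y⟫ = ⟪x, H y⟫)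
    (hG : ∀ x y : E, ⟪G x, y⟫ = ⟪x, G y⟫)
    (lam : ℕ → ℝ) (heig : ∀ k, H (u k) = lam k • u k)
    (n : ℕ) (hn : 1 ≤ n) (z : ℝ)
    (hlt : ∀ j < n, lam j < z) (hge : ∀ k, n ≤ k → z ≤ lam k) :
    ∑ j ∈ Finset.range n, (z - lam j) ^ 2 *
        ⟪u j, (G ∘L (H ∘L G - G ∘L H) - (H ∘L G - G ∘L H) ∘L G) (u j)⟫ ≤
      2 * ∑ j ∈ Finset.range n, (z - lam j) * ‖(H ∘L G - G ∘L H) (u j)‖ ^ 2 := by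
  set T : E →L[ℝ] E := H ∘L G - G ∘L H with hTdef
  set a : ℕ → ℕ → ℝ := fun j k => ⟪u k, G (u j)⟫ with hadef
  have hTapp : ∀ x, T x = H (G x) - G (H x) := fun x => rfl
  -- T is anti-self-adjoint
  have hTanti : ∀ x y : E, ⟪T x, y⟫ = -⟪x, T y⟫ := by
    intro x y
    rw [hTapp, hTapp]
    simp only [inner_sub_left, inner_sub_right, hH, hG]
    ring
  -- coefficients of T (u j)
  have hTa : ∀ j k, ⟪u k, T (u j)⟫ = (lam k - lam j) * a j k := by
    intro j k
    have h1 : ⟪u k, H (G (u j))⟫ = lam k * a j k := by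
      rw [← hH, heig, real_inner_smul_left]
    have h2 : ⟪u k, G (H (u j))⟫ = lam j * a j k := by
      rw [heig, map_smul, real_inner_smul_right]
    rw [hTapp, inner_sub_right, h1, h2]
    ring
  have hGa : ∀ j k, ⟪G (u j), u k⟫ = a j k := by
    intro j k
    rw [real_inner_comm]
  have hTb : ∀ j k, ⟪T (u j), u k⟫ = (lam k - lam j) * a j k := by
    intro j k
    rw [real_inner_comm, hTa]
  -- symmetry of a
  have hasymm : ∀ j k, a j k = a k j := by
    intro j k
    simp only [hadef]
    rw [← hG, real_inner_comm]
  -- summability facts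
  have s1 : ∀ j, Summable (fun k => (lam k - lam j) * (a j k) ^ 2) := by
    intro j
    apply Summable.congr (u.summable_inner_mul_inner (G (u j)) (T (u j)))
    intro k
    rw [hGa, hTa]
    ring
  have s2 : ∀ j, Summable (fun k => ((lam k - lam j) * a j k) ^ 2) := by
    intro j
    apply Summable.congr (u.summable_inner_mul_inner (T (u j)) (T (u j)))
    intro k
    rw [hTb, hTa]
    ring
  -- Parseval for the norm
  have hnorm : ∀ j, ‖T (u j)‖ ^ 2 = ∑' k, ((lam k - lam j) * a j k) ^ 2 := by
    intro j
    rw [← real_inner_self_eq_norm_sq, ← u.tsum_inner_mul_inner]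
    apply tsum_congr
    intro k
    rw [hTb, hTa]
    ring
  -- the diagonal term of the double commutator
  have hdiag : ∀ j, ⟪u j, (G ∘L T - T ∘L G) (u j)⟫
      = 2 * ∑' k, (lam k - lam j) * (a j k) ^ 2 := by
    intro j
    have e1 : ⟪G (u j), T (u j)⟫ = ∑' k, (lam k - lam j) * (a j k) ^ 2 := by
      rw [← u.tsum_inner_mul_inner]
      apply tsum_congr
      intro k
      rw [hGa, hTa]
      ring
    have e2 : ⟪u j, (G ∘L T - T ∘L G) (u j)⟫
        = ⟪G (u j), T (u j)⟫ + ⟪T (u j), G (u j)⟫ := by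
      have h3 : (G ∘L T - T ∘L G) (u j) = G (T (u j)) - T (G (u j)) := rfl
      rw [h3, inner_sub_right, ← hG]
      have := hTanti (u j) (G (u j))
      linarith
    have hc : ⟪T (u j), G (u j)⟫ = ⟪G (u j), T (u j)⟫ := real_inner_comm _ _
    rw [e2, hc, e1]
    ring
  -- the key antisymmetric quantity
  set f : ℕ → ℕ → ℝ :=
    fun j k => ((z - lam j) * (lam k - lam j)) * ((z - lam k) * (a j k) ^ 2) with hfdef
  have sf : ∀ j, Summable (f j) := by
    intro j
    have hfe : f j = fun k => (z - lam j) ^ 2 * ((lam k - lam j) * (a j k) ^ 2)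
        - (z - lam j) * ((lam k - lam j) * a j k) ^ 2 := by
      funext k; simp only [hfdef]; ring
    rw [hfe]
    exact ((s1 j).mul_left _).sub ((s2 j).mul_left _)
  -- per-j identity: difference of both sides equals 2 * ∑' f j
  have hper : ∀ j, (z - lam j) ^ 2 * (2 * ∑' k, (lam k - lam j) * (a j k) ^ 2)
      - 2 * ((z - lam j) * ∑' k, ((lam k - lam j) * a j k) ^ 2) = 2 * ∑' k, f j k := by
    intro j
    have h1 : ∑' k, f j k = (z - lam j) ^ 2 * ∑' k, (lam k - lam j) * (a j k) ^ 2
        - (z - lam j) * ∑' k, ((lam k - lam j) * a j k) ^ 2 := by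
      rw [← tsum_mul_left, ← tsum_mul_left,
        ← Summable.tsum_sub ((s1 j).mul_left _) ((s2 j).mul_left _)]
      apply tsum_congr
      intro k
      simp only [hfdef]; ring
    rw [h1]; ring
  -- split each tsum into k < n and k ≥ n
  have hsplit : ∀ j, ∑' k, f j k = (∑ k ∈ Finset.range n, f j k)
      + ∑' k : ↥(Finset.range n : Set ℕ)ᶜ, f j k := by
    intro j
    rw [← Summable.tsum_add_tsum_compl (s := (Finset.range n : Set ℕ))
      ((sf j).subtype _) ((sf j).subtype _)]
    congr 1
    exact (Finset.tsum_subtype (Finset.range n) (f j))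
  -- tail is nonpositive for j < n
  have htail : ∀ j < n, ∑' k : ↥(Finset.range n : Set ℕ)ᶜ, f j k ≤ 0 := by
    intro j hj
    have hterm : ∀ k : ↥(Finset.range n : Set ℕ)ᶜ, f j (k : ℕ) ≤ 0 := by
      rintro ⟨k, hk⟩
      have hkn : n ≤ k := by
        simpa [Set.mem_compl_iff, Finset.mem_coe, Finset.mem_range, not_lt] using hk
      have h1 : 0 ≤ z - lam j := by linarith [hlt j hj]
      have h2 : 0 ≤ lam k - lam j := by linarith [hlt j hj, hge k hkn]
      have h3 : z - lam k ≤ 0 := by linarith [hge k hkn]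
      exact mul_nonpos_of_nonneg_of_nonpos (mul_nonneg h1 h2)
        (mul_nonpos_of_nonpos_of_nonneg h3 (sq_nonneg _))
    calc ∑' k : ↥(Finset.range n : Set ℕ)ᶜ, f j k
        ≤ ∑' _ : ↥(Finset.range n : Set ℕ)ᶜ, (0 : ℝ) :=
          Summable.tsum_le_tsum hterm ((sf j).subtype _) summable_zero
      _ = 0 := tsum_zero
  -- the finite double sum vanishes by antisymmetry
  have hdouble : ∑ j ∈ Finset.range n, ∑ k ∈ Finset.range n, f j k = 0 := by
    have hanti : ∀ j k, f j k = -f k j := by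
      intro j k
      simp only [hfdef]
      rw [hasymm j k]
      ring
    have key : ∑ j ∈ Finset.range n, ∑ k ∈ Finset.range n, f j k
        = -∑ j ∈ Finset.range n, ∑ k ∈ Finset.range n, f j k := by
      calc ∑ j ∈ Finset.range n, ∑ k ∈ Finset.range n, f j k
          = ∑ j ∈ Finset.range n, ∑ k ∈ Finset.range n, -f k j := by
            apply Finset.sum_congr rfl; intro j _
            apply Finset.sum_congr rfl; intro k _
            exact hanti j k
        _ = -∑ j ∈ Finset.range n, ∑ k ∈ Finset.range n, f k j := by
            simp [Finset.sum_neg_distrib]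
        _ = -∑ j ∈ Finset.range n, ∑ k ∈ Finset.range n, f j k := by
            rw [Finset.sum_comm]
    linarith
  -- assemble
  calc ∑ j ∈ Finset.range n, (z - lam j) ^ 2 * ⟪u j, (G ∘L T - T ∘L G) (u j)⟫
      = ∑ j ∈ Finset.range n, ((2 : ℝ) * ((z - lam j) * ‖T (u j)‖ ^ 2)
          + 2 * ((∑ k ∈ Finset.range n, f j k)
            + ∑' k : ↥(Finset.range n : Set ℕ)ᶜ, f j k)) := by
        apply Finset.sum_congr rfl
        intro j _
        rw [hdiag j, hnorm j, ← hsplit j]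
        linarith [hper j]
    _ ≤ ∑ j ∈ Finset.range n, ((2 : ℝ) * ((z - lam j) * ‖T (u j)‖ ^ 2)
          + 2 * ∑ k ∈ Finset.range n, f j k) := by
        apply Finset.sum_le_sum
        intro j hj
        have := htail j (Finset.mem_range.mp hj)
        nlinarith
    _ = 2 * ∑ j ∈ Finset.range n, (z - lam j) * ‖T (u j)‖ ^ 2 := by
        rw [Finset.sum_add_distrib, ← Finset.mul_sum, ← Finset.mul_sum, hdouble]
        ring
end
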